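/- Under the confidence bounds |f(x) - μ(x)| ≤ β·σ(x) holding at both x* and x_t, and the inexact maximization condition α(x_t) ≥ η·α(x*) with 0 ≤ η ≤ 1 and α nonnegative, the instantaneous regret satisfies f(x*) - f(x_t) ≤ (1 - η)·α* + 2β·σ(x_t), where α* = sup_x α(x) and α(x) = μ(x) + β·σ(x). -/
import Mathlib

/-- Instantaneous regret bound under inexact acquisition maximization for GP-UCB. -/
theorem inexact_ucb_instantaneous_regret
    {X : Type*} (f μ σ : X → ℝ) (β η αstar : ℝ)
    (hσ : ∀ x, 0 ≤ σ x) (hβ : 0 ≤ β)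
    (hα_nonneg : ∀ x, 0 ≤ μ x + β * σ x)
    (hαstar : ∀ x, μ x + β * σ x ≤ αstar)
    (xstar xt : X)
    (hη : η ∈ Set.Icc (0:ℝ) 1)
    (hinexact : η * (μ xstar + β * σ xstar) ≤ μ xt + β * σ xt)
    (hconf_star : |f xstar - μ xstar| ≤ β * σ xstar)
    (hconf_t : |f xt - μ xt| ≤ β * σ xt) :
    f xstar - f xt ≤ (1 - η) * αstar + 2 * β * σ xt := by
  obtain ⟨hη0, hη1⟩ := hη
  have h1 := abs_le.mp hconf_star
  have h2 := abs_le.mp hconf_t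
  have hs := hαstar xstar
  have hn := hα_nonneg xstar
  nlinarith [h1.1, h1.2, h2.1, h2.2]
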